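/- arXiv:0903.1722 — 2 statements merged into one kernel-verified Lean document; each statement's English description precedes it below -/
import Mathlib

section
/- Let n ∈ ℕ, let t1, t2, t3, z ∈ ℂ, and set t4 = 1 − n − t3. Assume t1+t2, t1+t3, and t1+1−n−t3 all lie outside {0, −1, …, −(n−1)}. Then (−1)^n · W_n(z; t1, t2, t3, 1−n−t3) = (t1+t2)_n · (t3+z)_n · (t3−z)_n = (t1+t2)_n · ∏_{k=1}^{n} [(t3+k−1)² − z²]. Equivalently, in the variable x = −z², the monic Wilson polynomial (−1)^n W_n/(t1+t2)_n equals ∏_{k=1}^{n} [x + (t3+k−1)²], so its zeros are x = −(t3+k−1)² for k = 1, …, n. -/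
/-!
With `t₄ = 1 - n - t₃` the parameter `t₁ + t₂ + t₃ + t₄ + n - 1` of the `₄F₃` defining `W_n`
equals `t₁ + t₂`, so it cancels and leaves the balanced `₃F₂(-n, t₁ + z, t₁ - z; t₁ + t₃, t₁ + t₄)`.
The Pfaff–Saalschütz theorem evaluates it as `(-1)ⁿ (t₃ - z)ₙ (t₃ + z)ₙ / ((t₁ + t₃)ₙ (t₁ + t₄)ₙ)`.
-/

open Finset

/-- Pochhammer symbol `(a)_k = a (a+1) ⋯ (a+k-1)`. -/
noncomputable def poch (a : ℂ) (k : ℕ) : ℂ := ∏ i ∈ Finset.range k, (a + i)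

/-- The Wilson polynomial `W_n(z; t1,t2,t3,t4)` in the variable `z` (with `x = -z²`). -/
noncomputable def wilson (n : ℕ) (z t1 t2 t3 t4 : ℂ) : ℂ :=
  poch (t1 + t2) n * poch (t1 + t3) n * poch (t1 + t4) n *
    ∑ k ∈ Finset.range (n + 1),
      (poch (-(n : ℂ)) k * poch (t1 + t2 + t3 + t4 + (n : ℂ) - 1) k *
        poch (t1 + z) k * poch (t1 - z) k) /
      ((k.factorial : ℂ) * poch (t1 + t2) k * poch (t1 + t3) k * poch (t1 + t4) k)

open Polynomial

lemma poch_eq_smeval (a : ℂ) (k : ℕ) : poch a k = (ascPochhammer ℕ k).smeval a := by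
  rw [ascPochhammer_smeval_eq_eval]
  induction k with
  | zero => simp [poch]
  | succ k ih => rw [poch, prod_range_succ, ← poch, ih, ascPochhammer_succ_eval]

lemma poch_eq_descPochhammer (a : ℂ) (k : ℕ) :
    poch a k = (-1) ^ k * (descPochhammer ℤ k).smeval (-a) := by
  rw [poch_eq_smeval, ← neg_neg a, ascPochhammer_smeval_neg_eq_descPochhammer, neg_neg,
    Units.smul_def, Int.coe_negOnePow_natCast, zsmul_eq_mul]
  push_cast
  rfl

lemma poch_add (a : ℂ) (m n : ℕ) : poch a (m + n) = poch a m * poch (a + m) n := by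
  rw [poch, prod_range_add]
  congr 1
  refine prod_congr rfl fun i _ => ?_
  push_cast
  ring

lemma poch_eq_mul_poch_of_le (a : ℂ) {k n : ℕ} (hk : k ≤ n) :
    poch a n = poch a k * poch (a + k) (n - k) := by
  rw [← poch_add, Nat.add_sub_cancel' hk]

lemma poch_ne_zero {a : ℂ} {n : ℕ} (h : ∀ k < n, a + k ≠ 0) : poch a n ≠ 0 :=
  prod_ne_zero_iff.mpr fun k hk => h k (mem_range.mp hk)

lemma poch_neg_natCast (n k : ℕ) : poch (-n) k = (-1) ^ k * (k.factorial * n.choose k) := by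
  rw [poch_eq_descPochhammer, neg_neg, descPochhammer_smeval_eq_descFactorial,
    Nat.descFactorial_eq_factorial_mul_choose]
  push_cast
  rfl

lemma poch_one_sub_sub (m : ℕ) (x : ℂ) : poch (1 - m - x) m = (-1) ^ m * poch x m := by
  rw [poch_eq_descPochhammer, descPochhammer_smeval_eq_ascPochhammer, poch_eq_smeval]
  congr 3
  ring

lemma poch_add_mul_poch_sub (x z : ℂ) (n : ℕ) :
    poch (x + z) n * poch (x - z) n = ∏ k ∈ range n, ((x + k) ^ 2 - z ^ 2) := by
  rw [poch, poch, ← prod_mul_distrib]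
  exact prod_congr rfl fun k _ => by ring

theorem poch_add_eq_sum (x y : ℂ) (n : ℕ) :
    poch (x + y) n = ∑ k ∈ range (n + 1), (n.choose k : ℂ) * (poch x k * poch y (n - k)) := by
  rw [← Nat.sum_antidiagonal_eq_sum_range_succ
    (fun i j => (n.choose i : ℂ) * (poch x i * poch y j))]
  simp only [poch_eq_descPochhammer, neg_add]
  rw [Ring.descPochhammer_smeval_add n (Commute.all (-x) (-y)), mul_sum]
  refine sum_congr rfl fun ij hij => ?_
  rw [← mem_antidiagonal.mp hij, pow_add]
  ring

/-- Pfaff–Saalschütz with denominators cleared: Chu–Vandermonde splits `(c + k)_{n-k}` at `b + k`,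
and after regrouping by `m = k + j` two more applications of it sum the result. -/
theorem poch_saalschutz (n : ℕ) (a b c : ℂ) :
    ∑ k ∈ range (n + 1), (n.choose k : ℂ) *
        (poch a k * poch b k * poch (c - a - b) (n - k) * poch (c + k) (n - k))
      = poch (c - a) n * poch (c - b) n := by
  set f : ℕ → ℕ → ℂ := fun k j => (n.choose k : ℂ) * (n - k).choose j *
    (poch a k * poch b (k + j) * poch (c - a - b) (n - k) * poch (c - b) (n - k - j)) with hf
  have expand : ∀ k ∈ range (n + 1), (n.choose k : ℂ) *
      (poch a k * poch b k * poch (c - a - b) (n - k) * poch (c + k) (n - k))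
        = ∑ j ∈ range (n + 1 - k), f k j := by
    intro k hk
    rw [show c + k = (b + k) + (c - b) by ring, poch_add_eq_sum,
      show n - k + 1 = n + 1 - k by grind, mul_sum, mul_sum]
    refine sum_congr rfl fun j _ => ?_
    simp only [hf, poch_add]
    ring
  have collapse : ∀ m ∈ range (n + 1), ∑ k ∈ range (m + 1), f k (m - k)
      = n.choose m * (poch b m * poch (c - a - b) (n - m)) * poch (c - b) n := by
    intro m hm
    have hmn : m ≤ n := Nat.lt_succ_iff.mp (mem_range.mp hm)
    have term : ∀ k ∈ range (m + 1), f k (m - k)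
        = n.choose m * (poch b m * poch (c - a - b) (n - m)) * poch (c - b) (n - m) *
          ((m.choose k : ℂ) * (poch a k * poch (c - a - b + (n - m : ℕ)) (m - k))) := by
      intro k hk
      have hkm : k ≤ m := Nat.lt_succ_iff.mp (mem_range.mp hk)
      have hchoose : (n.choose k : ℂ) * (n - k).choose (m - k) = n.choose m * m.choose k := by
        exact_mod_cast (Nat.choose_mul (n := n) hkm).symm
      have hsplit : poch (c - a - b) (n - k)
          = poch (c - a - b) (n - m) * poch (c - a - b + (n - m : ℕ)) (m - k) := by
        rw [← poch_add, show n - m + (m - k) = n - k by omega]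
      simp only [hf]
      rw [show k + (m - k) = m by omega, show n - k - (m - k) = n - m by omega, hsplit, hchoose]
      ring
    rw [sum_congr rfl term, ← mul_sum, ← poch_add_eq_sum,
      show a + (c - a - b + (n - m : ℕ)) = c - b + (n - m : ℕ) by ring, mul_assoc, ← poch_add,
      show n - m + m = n by omega]
  rw [sum_congr rfl expand, ← sum_range_diag_flip, sum_congr rfl collapse, ← sum_mul,
    ← poch_add_eq_sum, show b + (c - a - b) = c - a by ring]

theorem pfaff_saalschutz (n : ℕ) (a b c d : ℂ) (hbal : c + d = a + b + 1 - n)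
    (hc : poch c n ≠ 0) (hd : poch d n ≠ 0) :
    poch c n * poch d n * ∑ k ∈ range (n + 1),
        poch (-n) k * poch a k * poch b k / (k.factorial * poch c k * poch d k)
      = (-1) ^ n * (poch (c - a) n * poch (c - b) n) := by
  rw [← poch_saalschutz, mul_sum, mul_sum]
  refine sum_congr rfl fun k hk => ?_
  have hkn : k ≤ n := Nat.lt_succ_iff.mp (mem_range.mp hk)
  rw [poch_eq_mul_poch_of_le c hkn] at hc ⊢
  rw [poch_eq_mul_poch_of_le d hkn] at hd ⊢
  have hd_shift : d + k = 1 - (n - k : ℕ) - (c - a - b) := by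
    rw [Nat.cast_sub hkn]
    linear_combination hbal
  have hsign : (-1 : ℂ) ^ (n - k) * (-1) ^ k = (-1) ^ n := by
    rw [← pow_add, Nat.sub_add_cancel hkn]
  have hfact : (k.factorial : ℂ) ≠ 0 := Nat.cast_ne_zero.mpr k.factorial_ne_zero
  rw [hd_shift, poch_one_sub_sub, poch_neg_natCast, ← hsign]
  field_simp [left_ne_zero_of_mul hc, left_ne_zero_of_mul hd]

lemma wilson_eq_of_add_eq (n : ℕ) (z t1 t2 t3 t4 : ℂ) (h34 : t3 + t4 = 1 - n)
    (h12 : poch (t1 + t2) n ≠ 0) :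
    wilson n z t1 t2 t3 t4 = poch (t1 + t2) n * (poch (t1 + t3) n * poch (t1 + t4) n *
      ∑ k ∈ range (n + 1), poch (-n) k * poch (t1 + z) k * poch (t1 - z) k /
        (k.factorial * poch (t1 + t3) k * poch (t1 + t4) k)) := by
  rw [wilson, show t1 + t2 + t3 + t4 + n - 1 = t1 + t2 by linear_combination h34, mul_assoc,
    mul_assoc, mul_assoc]
  congr 3
  refine sum_congr rfl fun k hk => ?_
  rw [poch_eq_mul_poch_of_le (t1 + t2) (Nat.lt_succ_iff.mp (mem_range.mp hk))] at h12
  have := left_ne_zero_of_mul h12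
  field_simp

theorem wilson_factorization_case1 (n : ℕ) (t1 t2 t3 z : ℂ)
    (h12 : ∀ k : ℕ, k < n → t1 + t2 + k ≠ 0)
    (h13 : ∀ k : ℕ, k < n → t1 + t3 + k ≠ 0)
    (h14 : ∀ k : ℕ, k < n → t1 + (1 - (n : ℂ) - t3) + k ≠ 0) :
    (-1 : ℂ) ^ n * wilson n z t1 t2 t3 (1 - (n : ℂ) - t3)
        = poch (t1 + t2) n * (poch (t3 + z) n * poch (t3 - z) n) ∧
    poch (t1 + t2) n * (poch (t3 + z) n * poch (t3 - z) n)
        = poch (t1 + t2) n * ∏ k ∈ Finset.range n, ((t3 + k) ^ 2 - z ^ 2) := by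
  refine ⟨?_, by rw [poch_add_mul_poch_sub]⟩
  have hsum := pfaff_saalschutz n (t1 + z) (t1 - z) (t1 + t3) (t1 + (1 - n - t3)) (by ring)
    (poch_ne_zero h13) (poch_ne_zero h14)
  rw [show t1 + t3 - (t1 + z) = t3 - z by ring, show t1 + t3 - (t1 - z) = t3 + z by ring] at hsum
  have hsq : (-1 : ℂ) ^ n * (-1) ^ n = 1 := by
    rw [← mul_pow]
    norm_num
  rw [wilson_eq_of_add_eq n z t1 t2 t3 _ (by ring) (poch_ne_zero h12), hsum]
  linear_combination poch (t1 + t2) n * poch (t3 + z) n * poch (t3 - z) n * hsq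
end

section
/- (q-analogue of the Pfaff–Saalschütz theorem.) Let n ∈ ℕ and q, A, B, C ∈ ℂ with q ≠ 0, A ≠ 0, B ≠ 0, C ≠ 0. Assume (q;q)_k ≠ 0, (C;q)_k ≠ 0, and (q^{1−n}AB/C;q)_k ≠ 0 for all k ≤ n, and (C/(AB);q)_n ≠ 0. Then Σ_{k=0}^{n} [(q^{−n};q)_k (A;q)_k (B;q)_k] / [(q;q)_k (C;q)_k (q^{1−n}AB/C;q)_k] · q^k = [(C/A;q)_n (C/B;q)_n] / [(C;q)_n (C/(AB);q)_n]. -/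
/-!
Put `d = C / (A B)`. Reversing the products `(q^{-n};q)_k` and `(q^{1-n}/d;q)_k` turns the `k`-th
summand into `[n,k]_q (A;q)_k (B;q)_k (d;q)_{n-k} (C q^k;q)_{n-k} d^k / ((C;q)_n (d;q)_n)`, so it
suffices that these numerators sum to `(A d;q)_n (B d;q)_n`. That is a polynomial identity, proved by
induction on `n` for all `d` at once: q-Pascal splits the sum at level `n + 1` into two sums at level
`n`, which combine termwise into `(1 - A d)(1 - B d)` times the level-`n` summand at `d q`, up to a
telescoping correction.
-/

open Finset

/-- q-shifted factorial `(a;q)_k = ∏_{j=0}^{k-1} (1 - a q^j)`. -/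
noncomputable def qpoch (a q : ℂ) (k : ℕ) : ℂ := ∏ i ∈ Finset.range k, (1 - a * q ^ i)

@[simp]
lemma qpoch_zero (a q : ℂ) : qpoch a q 0 = 1 := prod_range_zero _

lemma qpoch_one (a q : ℂ) : qpoch a q 1 = 1 - a := by simp [qpoch]

lemma qpoch_succ (a q : ℂ) (k : ℕ) : qpoch a q (k + 1) = qpoch a q k * (1 - a * q ^ k) :=
  prod_range_succ _ k

lemma qpoch_add (a q : ℂ) (m k : ℕ) :
    qpoch a q (m + k) = qpoch a q m * qpoch (a * q ^ m) q k := by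
  simp only [qpoch, prod_range_add, pow_add, mul_assoc]

lemma qpoch_succ' (a q : ℂ) (k : ℕ) : qpoch a q (k + 1) = (1 - a) * qpoch (a * q) q k := by
  rw [add_comm, qpoch_add, pow_one, qpoch_one]

lemma qpoch_eq_qpoch_sub_mul_prod (a q : ℂ) {n k : ℕ} (hk : k ≤ n) :
    qpoch a q n = qpoch a q (n - k) * ∏ i ∈ range k, (1 - a * q ^ (n - 1 - i)) := by
  conv_lhs => rw [← Nat.sub_add_cancel hk, qpoch, prod_range_add]
  rw [← prod_range_reflect (fun i => 1 - a * q ^ (n - 1 - i)) k]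
  refine congrArg _ (prod_congr rfl fun i hi => ?_)
  rw [mem_range] at hi
  congr 3
  omega

lemma qpoch_mul_prod_eq_neg_pow_mul_prod (b c q : ℂ) {n k : ℕ} (hbc : b * c * q ^ n = q)
    (hk : k ≤ n) :
    qpoch b q k * ∏ i ∈ range k, c * q ^ (n - i)
      = (-q) ^ k * ∏ i ∈ range k, (1 - c * q ^ (n - 1 - i)) := by
  have hfac : ∀ i ∈ range k,
      (1 - b * q ^ i) * (c * q ^ (n - i)) = -q * (1 - c * q ^ (n - 1 - i)) := by
    intro i hi
    have hn : n = i + (n - 1 - i) + 1 := by rw [mem_range] at hi; omega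
    rw [show n - i = n - 1 - i + 1 by omega]
    rw [hn, pow_add, pow_add] at hbc
    linear_combination -hbc
  rw [qpoch, ← prod_mul_distrib, prod_congr rfl hfac, prod_mul_distrib, prod_const, card_range]

-- The truncated `n - k` is harmless: `qbinom q n k = 0` whenever `n < k`.
def qbinom (q : ℂ) : ℕ → ℕ → ℂ
  | _, 0 => 1
  | 0, _ + 1 => 0
  | n + 1, k + 1 => q ^ (n - k) * qbinom q n k + qbinom q n (k + 1)

@[simp]
lemma qbinom_zero_right (q : ℂ) (n : ℕ) : qbinom q n 0 = 1 := by
  cases n <;> rfl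

lemma qbinom_succ_succ (q : ℂ) (n k : ℕ) :
    qbinom q (n + 1) (k + 1) = q ^ (n - k) * qbinom q n k + qbinom q n (k + 1) := rfl

lemma qbinom_eq_zero_of_lt (q : ℂ) {n k : ℕ} (h : n < k) : qbinom q n k = 0 := by
  induction n generalizing k with
  | zero => obtain ⟨k, rfl⟩ := Nat.exists_eq_add_one.2 h; rfl
  | succ n ih =>
    obtain ⟨k, rfl⟩ := Nat.exists_eq_add_one.2 (Nat.zero_lt_of_lt h)
    rw [qbinom_succ_succ, ih (by omega), ih (by omega), mul_zero, add_zero]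

lemma qbinom_succ_mul_one_sub_pow (q : ℂ) (n k : ℕ) :
    qbinom q n (k + 1) * (1 - q ^ (k + 1)) = qbinom q n k * (1 - q ^ (n - k)) := by
  induction n generalizing k with
  | zero => simp [qbinom]
  | succ n ih =>
    rcases k with _ | k
    · have h := ih 0
      simp only [qbinom_zero_right, zero_add, pow_one, Nat.sub_zero] at h ⊢
      rw [qbinom_succ_succ, Nat.sub_zero, qbinom_zero_right]
      linear_combination h
    · rcases lt_or_ge n (k + 1) with hlt | hle
      · rw [qbinom_succ_succ, qbinom_succ_succ, qbinom_eq_zero_of_lt q hlt,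
          qbinom_eq_zero_of_lt q (by omega : n < k + 2), show n + 1 - (k + 1) = n - k by omega,
          show n - k = 0 by omega]
        simp
      · obtain ⟨r, rfl⟩ := Nat.exists_eq_add_of_le hle
        have h₁ := ih k
        have h₂ := ih (k + 1)
        rw [show k + 1 + r - k = r + 1 by omega] at h₁
        rw [show k + 1 + r - (k + 1) = r by omega] at h₂
        rw [qbinom_succ_succ, qbinom_succ_succ, show k + 1 + r - (k + 1) = r by omega,
          show k + 1 + r - k = r + 1 by omega, show k + 1 + r + 1 - (k + 1) = r + 1 by omega]
        linear_combination q ^ (r + 1) * h₁ + h₂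

lemma qbinom_mul_qpoch (q : ℂ) (n k : ℕ) :
    qbinom q n k * qpoch q q k = ∏ i ∈ range k, (1 - q ^ (n - i)) := by
  induction k with
  | zero => simp
  | succ k ih =>
    rw [prod_range_succ, ← ih, qpoch_succ, ← pow_succ']
    linear_combination qpoch q q k * qbinom_succ_mul_one_sub_pow q n k

lemma qpoch_mul_pow_mul_qpoch_eq_qbinom_mul {q w e d : ℂ} {n k : ℕ} (hq : q ≠ 0)
    (hw : w * q ^ n = 1) (he : e * d = q * w) (hk : k ≤ n) :
    qpoch w q k * q ^ k * qpoch d q n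
      = qbinom q n k * qpoch q q k * qpoch e q k * d ^ k * qpoch d q (n - k) := by
  have hP : ∏ i ∈ range k, q ^ (n - i) ≠ 0 := prod_ne_zero_iff.2 fun i _ => pow_ne_zero _ hq
  have hw' := qpoch_mul_prod_eq_neg_pow_mul_prod w q q (by linear_combination q * hw) hk
  have he' := qpoch_mul_prod_eq_neg_pow_mul_prod e d q
    (by linear_combination q ^ n * he + q * hw) hk
  have hfalling : ∏ i ∈ range k, (1 - q * q ^ (n - 1 - i)) = qbinom q n k * qpoch q q k := by
    rw [qbinom_mul_qpoch]
    refine prod_congr rfl fun i hi => ?_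
    rw [← pow_succ', show n - 1 - i + 1 = n - i by rw [mem_range] at hi; omega]
  rw [hfalling] at hw'
  simp only [prod_mul_distrib, prod_const, card_range] at hw' he'
  apply mul_right_cancel₀ hP
  rw [qpoch_eq_qpoch_sub_mul_prod d q hk]
  linear_combination qpoch d q (n - k) * (∏ i ∈ range k, (1 - d * q ^ (n - 1 - i))) * hw'
    - qbinom q n k * qpoch q q k * qpoch d q (n - k) * he'
lemma sum_range_succ_qbinom_succ_mul (q : ℂ) (n : ℕ) (f : ℕ → ℂ) :
    ∑ k ∈ range (n + 2), qbinom q (n + 1) k * f k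
      = ∑ j ∈ range (n + 1), qbinom q n j * (q ^ (n - j) * f (j + 1) + f j) := by
  have htop : qbinom q n (n + 1) * f (n + 1) = 0 := by
    rw [qbinom_eq_zero_of_lt q n.lt_succ_self, zero_mul]
  calc ∑ k ∈ range (n + 2), qbinom q (n + 1) k * f k
      = ∑ j ∈ range (n + 1), q ^ (n - j) * qbinom q n j * f (j + 1)
          + (∑ j ∈ range (n + 1), qbinom q n (j + 1) * f (j + 1) + qbinom q n 0 * f 0) := by
        simp only [sum_range_succ' _ (n + 1), qbinom_succ_succ, add_mul, sum_add_distrib,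
          qbinom_zero_right, add_assoc]
    _ = ∑ j ∈ range (n + 1), q ^ (n - j) * qbinom q n j * f (j + 1)
          + ∑ j ∈ range (n + 1), qbinom q n j * f j := by
        rw [← sum_range_succ' (fun j => qbinom q n j * f j),
          sum_range_succ (fun j => qbinom q n j * f j) (n + 1), htop, add_zero]
    _ = _ := by
        rw [← sum_add_distrib]
        exact sum_congr rfl fun j _ => by ring

section Saalschuetz

variable (q A B : ℂ)

noncomputable def saalschuetzTerm (d : ℂ) (n k : ℕ) : ℂ :=
  qpoch A q k * qpoch B q k * qpoch d q (n - k) * qpoch (A * B * d * q ^ k) q (n - k) * d ^ k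

noncomputable def saalschuetzCert (d : ℂ) (n j : ℕ) : ℂ :=
  qpoch A q j * qpoch B q j * qpoch (d * q) q (n - j) * qpoch (A * B * d * q ^ j) q (n - j) *
    d ^ j * (1 - A * B * d * q ^ n)

lemma saalschuetzTerm_succ (d : ℂ) {n j : ℕ} (hj : j ≤ n) :
    q ^ (n - j) * saalschuetzTerm q A B d (n + 1) (j + 1) + saalschuetzTerm q A B d (n + 1) j
      = (1 - A * d) * (1 - B * d) * saalschuetzTerm q A B (d * q) n j
        + ((1 - q ^ j) * saalschuetzCert q A B d n j - (1 - q ^ (n - j)) * saalschuetzCert q A B d n (j + 1)) := by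
  obtain ⟨m, rfl⟩ := Nat.exists_eq_add_of_le hj
  rcases m with _ | m
  · simp only [saalschuetzTerm, saalschuetzCert, add_zero, Nat.sub_self, show j + 1 - j = 1 by omega,
      show j - (j + 1) = 0 by omega, qpoch_zero, qpoch_one, qpoch_succ A q j, qpoch_succ B q j,
      pow_zero, sub_self, zero_mul, sub_zero, mul_pow]
    ring
  · simp only [saalschuetzTerm, saalschuetzCert, qpoch_succ A q j, qpoch_succ B q j,
      show j + (m + 1) + 1 - (j + 1) = m + 1 by omega, show j + (m + 1) + 1 - j = m + 1 + 1 by omega,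
      show j + (m + 1) - j = m + 1 by omega, show j + (m + 1) - (j + 1) = m by omega,
      show A * B * (d * q) * q ^ j = A * B * d * q ^ j * q by ring,
      show A * B * d * q ^ (j + 1) = A * B * d * q ^ j * q by ring, mul_pow,
      qpoch_succ' d q (m + 1), qpoch_succ' d q m, qpoch_succ (d * q) q m,
      qpoch_succ' (A * B * d * q ^ j) q (m + 1), qpoch_succ' (A * B * d * q ^ j) q m,
      qpoch_succ (A * B * d * q ^ j * q) q m]
    ring

theorem sum_qbinom_mul_saalschuetzTerm (n : ℕ) (d : ℂ) :
    ∑ k ∈ range (n + 1), qbinom q n k * saalschuetzTerm q A B d n k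
      = qpoch (A * d) q n * qpoch (B * d) q n := by
  induction n generalizing d with
  | zero => simp [saalschuetzTerm]
  | succ n ih =>
    -- `F` vanishes at `j = 0` and at `j = n + 1`, so the error terms of the recurrence telescope away.
    set F : ℕ → ℂ := fun j => qbinom q n j * (1 - q ^ j) * saalschuetzCert q A B d n j
    have hstep : ∀ j ∈ range (n + 1),
        qbinom q n j * (q ^ (n - j) * saalschuetzTerm q A B d (n + 1) (j + 1) + saalschuetzTerm q A B d (n + 1) j)
          = (1 - A * d) * (1 - B * d) * (qbinom q n j * saalschuetzTerm q A B (d * q) n j)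
            + (F j - F (j + 1)) := by
      intro j hj
      rw [saalschuetzTerm_succ q A B d (Nat.lt_succ_iff.1 (mem_range.1 hj))]
      simp only [F]
      rw [qbinom_succ_mul_one_sub_pow]
      ring
    rw [sum_range_succ_qbinom_succ_mul, sum_congr rfl hstep, sum_add_distrib, ← mul_sum, ih,
      sum_range_sub', qpoch_succ' (A * d), qpoch_succ' (B * d), mul_assoc A d q, mul_assoc B d q]
    simp only [F, pow_zero, sub_self, mul_zero, zero_mul, qbinom_eq_zero_of_lt q n.lt_succ_self]
    ring

end Saalschuetz

theorem q_pfaff_saalschuetz (n : ℕ) (q A B C : ℂ)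
    (hq : q ≠ 0) (hA : A ≠ 0) (hB : B ≠ 0) (hC : C ≠ 0)
    (hqq : ∀ k : ℕ, k ≤ n → qpoch q q k ≠ 0)
    (hCk : ∀ k : ℕ, k ≤ n → qpoch C q k ≠ 0)
    (hD : ∀ k : ℕ, k ≤ n → qpoch (q ^ (1 - (n : ℤ)) * A * B / C) q k ≠ 0)
    (hCAB : qpoch (C / (A * B)) q n ≠ 0) :
    ∑ k ∈ Finset.range (n + 1),
        (qpoch (q ^ (-(n : ℤ))) q k * qpoch A q k * qpoch B q k) /
          (qpoch q q k * qpoch C q k * qpoch (q ^ (1 - (n : ℤ)) * A * B / C) q k) * q ^ k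
      = (qpoch (C / A) q n * qpoch (C / B) q n) /
          (qpoch C q n * qpoch (C / (A * B)) q n) := by
  set d := C / (A * B)
  set w := q ^ (-(n : ℤ))
  set e := q ^ (1 - (n : ℤ)) * A * B / C
  have hw : w * q ^ n = 1 := by simp [w, zpow_neg, hq]
  have he : e * d = q * w := by
    simp only [e, d, w, sub_eq_add_neg, zpow_add₀ hq, zpow_one]
    field_simp
  have hABd : A * B * d = C := by simp only [d]; field_simp
  have hterm : ∀ k ∈ range (n + 1),
      qpoch w q k * qpoch A q k * qpoch B q k / (qpoch q q k * qpoch C q k * qpoch e q k) * q ^ k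
        = qbinom q n k * saalschuetzTerm q A B d n k / (qpoch C q n * qpoch d q n) := by
    intro k hkn
    have hk : k ≤ n := Nat.lt_succ_iff.1 (mem_range.1 hkn)
    have hsplit : qpoch C q n = qpoch C q k * qpoch (C * q ^ k) q (n - k) := by
      rw [← qpoch_add, Nat.add_sub_cancel' hk]
    rw [div_mul_eq_mul_div, div_eq_div_iff (by simp [hqq k hk, hCk k hk, hD k hk, e])
      (mul_ne_zero (hCk n le_rfl) hCAB), saalschuetzTerm, hABd, hsplit]
    linear_combination qpoch A q k * qpoch B q k * qpoch C q k * qpoch (C * q ^ k) q (n - k) *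
      qpoch_mul_pow_mul_qpoch_eq_qbinom_mul hq hw he hk
  rw [sum_congr rfl hterm, ← sum_div, sum_qbinom_mul_saalschuetzTerm, mul_comm,
    show A * d = C / B by simp only [d]; field_simp, show B * d = C / A by simp only [d]; field_simp]
end
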